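/- arXiv:2105.04675 — 2 statements merged into one kernel-verified Lean document; each statement's English description precedes it below -/
import Mathlib

section
/- Let f : (0,∞) → ℝ be continuous, rapidly decaying at infinity (f(t) = O(t^{-n}) for all n), and suppose f admits an asymptotic expansion f(t) ~ Σ_{k≥0} c_k t^{i_k} as t → 0⁺, where (i_k) is a strictly increasing sequence of reals with i_k → +∞. Then the Mellin transform M_f(s) = ∫₀^∞ f(t) t^{s-1} dt, initially holomorphic for Re(s) > -i_0, extends to a meromorphic function on ℂ whose only singularities are simple poles at s = -i_k with residue c_k. -/
open MeasureTheory Set Filter Asymptotics Topology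

noncomputable def Paux (c : ℕ → ℝ) (i : ℕ → ℝ) (k : ℕ) : ℝ → ℂ :=
  Set.indicator (Set.Ioc 0 1) (fun t : ℝ => (c k : ℂ) * (t : ℂ) ^ (i k : ℂ))

noncomputable def Faux (f : ℝ → ℝ) (c : ℕ → ℝ) (i : ℕ → ℝ) (N : ℕ) : ℝ → ℂ :=
  fun t => (f t : ℂ) - ∑ k ∈ Finset.range N, Paux c i k t

theorem hasMellin_zero (s : ℂ) : HasMellin (fun _ : ℝ => (0 : ℂ)) s 0 := by
  constructor
  · simpa [MellinConvergent] using (integrableOn_zero :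
      IntegrableOn (fun _ : ℝ => (0 : ℂ)) (Set.Ioi 0) volume)
  · simp [mellin]

theorem hasMellin_finset_sum {ι : Type*} {s : ℂ} {g : ι → ℝ → ℂ} {m : ι → ℂ}
    (T : Finset ι) (h : ∀ k ∈ T, HasMellin (g k) s (m k)) :
    HasMellin (fun t => ∑ k ∈ T, g k t) s (∑ k ∈ T, m k) := by
  classical
  induction T using Finset.cons_induction with
  | empty => simpa using hasMellin_zero s
  | cons a T ha ih =>
    have h1 := h a (Finset.mem_cons_self a T)
    have h2 := ih (fun k hk => h k (Finset.mem_cons_of_mem hk))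
    have h3 := hasMellin_add h1.1 h2.1
    simp only [Finset.sum_cons]
    exact ⟨h3.1, by rw [h3.2, h1.2, h2.2]⟩

/-- Meromorphic continuation of the Mellin transform of a function with an
asymptotic expansion at `0` and rapid decay at `∞`: simple poles at `s = -i k`
with residues `c k`. -/
theorem stmt1 (f : ℝ → ℝ) (c : ℕ → ℝ) (i : ℕ → ℝ)
    (hf : ContinuousOn f (Set.Ioi 0))
    (hmono : StrictMono i) (htop : Tendsto i atTop atTop)
    (hinf : ∀ n : ℕ, f =O[atTop] fun t : ℝ => t ^ (-(n : ℝ)))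
    (hexp : ∀ N : ℕ,
      (fun t : ℝ => f t - ∑ k ∈ Finset.range N, c k * t ^ (i k))
        =O[nhdsWithin 0 (Set.Ioi 0)] fun t : ℝ => t ^ (i N)) :
    ∃ M : ℂ → ℂ,
      (∀ s : ℂ, -(i 0) < s.re →
        M s = ∫ t in Set.Ioi (0:ℝ), (f t : ℂ) * (t : ℂ) ^ (s - 1)) ∧
      (∀ s : ℂ, (∀ k : ℕ, s ≠ -(i k : ℂ)) → AnalyticAt ℂ M s) ∧
      (∀ k : ℕ, Tendsto (fun s : ℂ => (s + (i k : ℂ)) * M s)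
        (𝓝[≠] (-(i k : ℂ))) (𝓝 (c k : ℂ))) := by
  classical
  -- locally integrable facts
  have hfc_loc : LocallyIntegrableOn (fun t : ℝ => (f t : ℂ)) (Set.Ioi 0) volume :=
    (Complex.continuous_ofReal.comp_continuousOn hf).locallyIntegrableOn measurableSet_Ioi
  have hP_loc : ∀ k, LocallyIntegrableOn (Paux c i k) (Set.Ioi 0) volume := by
    intro k
    have hcont : ContinuousOn (fun t : ℝ => (c k : ℂ) * (t : ℂ) ^ (i k : ℂ)) (Set.Ioi 0) := by
      apply continuousOn_const.mul
      intro t ht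
      exact (Complex.continuousAt_ofReal_cpow_const _ _ (Or.inr (ne_of_gt ht))).continuousWithinAt
    have hloc := hcont.locallyIntegrableOn measurableSet_Ioi (μ := volume)
    intro x hx
    obtain ⟨t, ht, hint⟩ := hloc x hx
    exact ⟨t, ht, hint.indicator measurableSet_Ioc⟩
  have hF_loc : ∀ N, LocallyIntegrableOn (Faux f c i N) (Set.Ioi 0) volume := by
    intro N
    have : ∀ N, LocallyIntegrableOn (fun t => ∑ k ∈ Finset.range N, Paux c i k t)
        (Set.Ioi 0) volume := by
      intro N
      induction N with
      | zero => simpa using (locallyIntegrableOn_zero :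
          LocallyIntegrableOn (fun _ : ℝ => (0:ℂ)) (Set.Ioi 0) volume)
      | succ n ih =>
        simp only [Finset.sum_range_succ]
        exact ih.add (hP_loc n)
    exact hfc_loc.sub (this N)
  -- asymptotics of Faux
  have hF_bot : ∀ N, (Faux f c i N) =O[𝓝[>] (0:ℝ)] fun t : ℝ => t ^ (i N) := by
    intro N
    have h1 : Faux f c i N =ᶠ[𝓝[>] (0:ℝ)]
        fun t : ℝ => ((f t - ∑ k ∈ Finset.range N, c k * t ^ (i k) : ℝ) : ℂ) := by
      filter_upwards [Ioo_mem_nhdsGT_of_mem (left_mem_Ico.2 one_pos)] with t ht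
      have hmem : t ∈ Set.Ioc (0:ℝ) 1 := ⟨ht.1, ht.2.le⟩
      simp only [Faux, Paux, Set.indicator_of_mem hmem]
      push_cast [Complex.ofReal_cpow ht.1.le]
      ring
    have h2 : (fun t : ℝ => ((f t - ∑ k ∈ Finset.range N, c k * t ^ (i k) : ℝ) : ℂ))
        =O[𝓝[>] (0:ℝ)] fun t : ℝ => t ^ (i N) := by
      rw [← isBigO_norm_left]
      simpa only [Complex.norm_real] using (hexp N).norm_left
    exact h2.congr' h1.symm EventuallyEq.rfl
  have hF_top : ∀ (N n : ℕ), (Faux f c i N) =O[atTop] fun t : ℝ => t ^ (-(n:ℝ)) := by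
    intro N n
    have h1 : Faux f c i N =ᶠ[(atTop : Filter ℝ)] fun t : ℝ => (f t : ℂ) := by
      filter_upwards [eventually_gt_atTop (1:ℝ)] with t ht
      have hmem : t ∉ Set.Ioc (0:ℝ) 1 := fun hm => absurd hm.2 (not_le.2 ht)
      simp [Faux, Paux, Set.indicator_of_notMem hmem]
    have h2 : (fun t : ℝ => (f t : ℂ)) =O[atTop] fun t : ℝ => t ^ (-(n:ℝ)) := by
      rw [← isBigO_norm_left]
      simpa only [Complex.norm_real] using (hinf n).norm_left
    exact h2.congr' h1.symm EventuallyEq.rfl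
  -- convergence & differentiability of mellin (Faux N)
  have hFconv : ∀ N (s : ℂ), -(i N) < s.re → MellinConvergent (Faux f c i N) s := by
    intro N s hs
    obtain ⟨n, hn⟩ := exists_nat_gt s.re
    exact mellinConvergent_of_isBigO_rpow (hF_loc N) (hF_top N n) hn
      (by simpa using hF_bot N) hs
  have hFdiff : ∀ N (s : ℂ), -(i N) < s.re → DifferentiableAt ℂ (mellin (Faux f c i N)) s := by
    intro N s hs
    obtain ⟨n, hn⟩ := exists_nat_gt s.re
    exact mellin_differentiableAt_of_isBigO_rpow (hF_loc N) (hF_top N n) hn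
      (by simpa using hF_bot N) hs
  -- Mellin transform of the pieces
  have hP : ∀ (k : ℕ) (s : ℂ), -(i k) < s.re →
      HasMellin (Paux c i k) s ((c k : ℂ) / (s + (i k : ℂ))) := by
    intro k s hs
    have hs' : 0 < s.re + ((i k : ℝ) : ℂ).re := by
      rw [Complex.ofReal_re]; linarith
    have H := hasMellin_cpow_Ioc ((i k : ℝ) : ℂ) hs'
    have heq : Paux c i k = fun t =>
        (c k : ℂ) • Set.indicator (Set.Ioc 0 1) (fun t : ℝ => (t : ℂ) ^ (i k : ℂ)) t := by
      funext t
      by_cases h : t ∈ Set.Ioc (0:ℝ) 1 <;> simp [Paux, h]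
    refine ⟨?_, ?_⟩
    · rw [heq]; exact H.1.const_smul _
    · rw [heq, mellin_const_smul, H.2, smul_eq_mul, mul_one_div]
  -- key telescoping identity
  have key : ∀ (m N : ℕ) (s : ℂ), m ≤ N → -(i m) < s.re → -(i N) < s.re →
      mellin (Faux f c i m) s
        = mellin (Faux f c i N) s + ∑ k ∈ Finset.Ico m N, (c k : ℂ) / (s + (i k : ℂ)) := by
    intro m N s hmN hsm hsN
    have hPk : ∀ k ∈ Finset.Ico m N, HasMellin (Paux c i k) s ((c k : ℂ) / (s + (i k : ℂ))) := by
      intro k hk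
      have : i m ≤ i k := hmono.monotone (Finset.mem_Ico.1 hk).1
      exact hP k s (by linarith)
    have h2 := hasMellin_finset_sum (Finset.Ico m N) hPk
    have h3 := hasMellin_add (hFconv N s hsN) h2.1
    have hsplit : Faux f c i m
        = fun t => Faux f c i N t + ∑ k ∈ Finset.Ico m N, Paux c i k t := by
      funext t
      have : ∑ k ∈ Finset.range m, Paux c i k t + ∑ k ∈ Finset.Ico m N, Paux c i k t
          = ∑ k ∈ Finset.range N, Paux c i k t := by
        simp only [Finset.range_eq_Ico]
        exact Finset.sum_Ico_consecutive _ (Nat.zero_le m) hmN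
      simp only [Faux]
      rw [← this]; ring
    rw [hsplit, h3.2, h2.2]
  -- choice of truncation level
  have hex : ∀ x : ℝ, ∃ N : ℕ, -(i N) < x := by
    intro x
    obtain ⟨N, hN⟩ := (htop.eventually_gt_atTop (-x)).exists
    exact ⟨N, by linarith⟩
  choose Nf hNf using hex
  -- well-definedness of the glued function
  have gkey : ∀ (m N : ℕ) (s : ℂ), -(i m) < s.re → -(i N) < s.re →
      mellin (Faux f c i m) s + ∑ k ∈ Finset.range m, (c k : ℂ) / (s + (i k : ℂ))
        = mellin (Faux f c i N) s + ∑ k ∈ Finset.range N, (c k : ℂ) / (s + (i k : ℂ)) := by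
    have main : ∀ (m N : ℕ), m ≤ N → ∀ (s : ℂ), -(i m) < s.re → -(i N) < s.re →
        mellin (Faux f c i m) s + ∑ k ∈ Finset.range m, (c k : ℂ) / (s + (i k : ℂ))
          = mellin (Faux f c i N) s + ∑ k ∈ Finset.range N, (c k : ℂ) / (s + (i k : ℂ)) := by
      intro m N hmN s hsm hsN
      rw [key m N s hmN hsm hsN]
      have : ∑ k ∈ Finset.range m, (c k : ℂ) / (s + (i k : ℂ))
          + ∑ k ∈ Finset.Ico m N, (c k : ℂ) / (s + (i k : ℂ))
          = ∑ k ∈ Finset.range N, (c k : ℂ) / (s + (i k : ℂ)) := by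
        simp only [Finset.range_eq_Ico]
        exact Finset.sum_Ico_consecutive _ (Nat.zero_le m) hmN
      rw [← this]; ring
    intro m N s hsm hsN
    rcases le_total m N with h | h
    · exact main m N h s hsm hsN
    · exact (main N m h s hsN hsm).symm
  refine ⟨fun s => mellin (Faux f c i (Nf s.re)) s
      + ∑ k ∈ Finset.range (Nf s.re), (c k : ℂ) / (s + (i k : ℂ)), ?_, ?_, ?_⟩
  · -- agreement with the integral for re s > -(i 0)
    intro s hs
    show mellin (Faux f c i (Nf s.re)) s
        + ∑ k ∈ Finset.range (Nf s.re), (c k : ℂ) / (s + (i k : ℂ)) = _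
    rw [gkey (Nf s.re) 0 s (hNf s.re) hs]
    have hF0 : Faux f c i 0 = fun t : ℝ => (f t : ℂ) := by
      funext t; simp [Faux]
    rw [hF0]
    simp only [Finset.range_zero, Finset.sum_empty, add_zero, mellin]
    exact setIntegral_congr_fun measurableSet_Ioi fun t ht => by
      rw [smul_eq_mul, mul_comm]
  · -- analyticity away from the poles
    intro s₀ hs₀
    set N := Nf s₀.re with hNdef
    have hs₀N : -(i N) < s₀.re := hNf s₀.re
    set U : Set ℂ := {s : ℂ | -(i N) < s.re} ∩ ⋂ k ∈ Finset.range N, {(-(i k : ℂ))}ᶜ with hU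
    have hUo : IsOpen U := by
      refine IsOpen.inter ?_ (isOpen_biInter_finset fun k _ => isOpen_compl_singleton)
      exact isOpen_lt continuous_const Complex.continuous_re
    have hs₀U : s₀ ∈ U := by
      refine ⟨hs₀N, ?_⟩
      simp only [Set.mem_iInter, Set.mem_compl_iff, Set.mem_singleton_iff]
      exact fun k _ => hs₀ k
    have hU_mem : U ∈ 𝓝 s₀ := hUo.mem_nhds hs₀U
    have hg : AnalyticAt ℂ (fun s => mellin (Faux f c i N) s
        + ∑ k ∈ Finset.range N, (c k : ℂ) / (s + (i k : ℂ))) s₀ := by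
      refine DifferentiableOn.analyticAt (fun s hs => DifferentiableAt.differentiableWithinAt ?_)
        hU_mem
      obtain ⟨hs1, hs2⟩ := hs
      refine (hFdiff N s hs1).add (DifferentiableAt.fun_sum fun k hk => ?_)
      have hne : s + (i k : ℂ) ≠ 0 := by
        intro h0
        have : s = -(i k : ℂ) := by linear_combination h0
        have hsk : s ≠ -(i k : ℂ) := by
          have := Set.mem_iInter₂.1 hs2 k hk
          simpa using this
        exact hsk this
      exact (differentiableAt_const _).div ((differentiable_id.differentiableAt).add_const _) hne
    refine hg.congr ?_
    filter_upwards [hU_mem] with s hs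
    exact (gkey (Nf s.re) N s (hNf s.re) hs.1).symm
  · -- residues
    intro k
    set s₀ : ℂ := -(i k : ℂ) with hs₀def
    have hs₀re : s₀.re = -(i k) := by simp [hs₀def]
    have hlt : -(i (k+1)) < s₀.re := by
      rw [hs₀re]
      have := hmono (Nat.lt_succ_self k)
      linarith
    set h : ℂ → ℂ := fun s => mellin (Faux f c i (k+1)) s
        + ∑ j ∈ Finset.range k, (c j : ℂ) / (s + (i j : ℂ)) with hhdef
    have hcont : ContinuousAt h s₀ := by
      refine ((hFdiff (k+1) s₀ hlt).continuousAt).add (DifferentiableAt.continuousAt (𝕜 := ℂ) (DifferentiableAt.fun_sum fun j hj => ?_))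
      have hjk : j < k := Finset.mem_range.1 hj
      have hne : s₀ + (i j : ℂ) ≠ 0 := by
        intro h0
        have : (i j : ℂ) = (i k : ℂ) := by rw [hs₀def] at h0; linear_combination h0
        exact (hmono hjk).ne (by exact_mod_cast this)
      exact (differentiableAt_const _).div ((differentiable_id.differentiableAt).add_const _) hne
    have htend : Tendsto (fun s : ℂ => (s + (i k : ℂ)) * h s + (c k : ℂ)) (𝓝 s₀)
        (𝓝 ((s₀ + (i k : ℂ)) * h s₀ + (c k : ℂ))) :=
      (((continuousAt_id.add continuousAt_const).mul hcont).add continuousAt_const)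
    have hval : (s₀ + (i k : ℂ)) * h s₀ + (c k : ℂ) = (c k : ℂ) := by
      rw [hs₀def]; ring
    rw [hval] at htend
    have htend' := htend.mono_left (nhdsWithin_le_nhds (s := {s₀}ᶜ))
    refine htend'.congr' ?_
    have hVmem : {s : ℂ | -(i (k+1)) < s.re} ∈ 𝓝[≠] s₀ := by
      refine nhdsWithin_le_nhds ?_
      exact (isOpen_lt continuous_const Complex.continuous_re).mem_nhds hlt
    filter_upwards [hVmem, self_mem_nhdsWithin] with s hsV hs_ne
    have hsne : s + (i k : ℂ) ≠ 0 := by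
      intro h0
      apply hs_ne
      show s = s₀
      rw [hs₀def]; linear_combination h0
    have hMs : mellin (Faux f c i (Nf s.re)) s
        + ∑ j ∈ Finset.range (Nf s.re), (c j : ℂ) / (s + (i j : ℂ))
        = h s + (c k : ℂ) / (s + (i k : ℂ)) := by
      rw [gkey (Nf s.re) (k+1) s (hNf s.re) hsV, hhdef]
      simp only [Finset.sum_range_succ]
      ring
    rw [hMs]
    field_simp
end

section
/- Let Γ act properly discontinuously, freely, and by isometries on a proper metric space X with basepoint o, with Dirichlet domain D defined by face-pairing elements γ₁,…,γ_m, and assume o lies in the interior of D (i.e., o is the unique point of D in its Γ-orbit). Then for every γ ∈ Γ the following reduction algorithm terminates and outputs γ: starting from x = γ·o, repeatedly replace x by γᵢ⁻¹·x for some i with d(γᵢ⁻¹·x, o) < d(x,o) while recording γᵢ, until x ∈ D; then γ equals the product of the recorded elements in order. -/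
/-! Proper discontinuity makes the orbit of `o` locally finite, so "`g • o` is strictly closer to
`o` than `h • o`" is a well-founded relation on `G`. Each reduction step moves the orbit point
`g • o` to the strictly closer orbit point `((γs i)⁻¹ * g) • o`, hence the algorithm stops, at a
point `((L.map γs).prod)⁻¹ • γ • o` of `D`. That point is an orbit point in `D`, so it is `o`,
and freeness gives `(L.map γs).prod = γ`. -/

section OrbitDistance

variable {G X : Type*} [Group G] [MulAction G X]

theorem finite_setOf_smul_mem_of_isCompact [TopologicalSpace X] [ProperlyDiscontinuousSMul G X]
    (x : X) {K : Set X} (hK : IsCompact K) : {g : G | g • x ∈ K}.Finite :=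
  (ProperlyDiscontinuousSMul.finite_disjoint_inter_image isCompact_singleton hK).subset
    fun g hg => ⟨g • x, ⟨x, rfl, rfl⟩, hg⟩

variable [PseudoMetricSpace X] [ProperSpace X] [ProperlyDiscontinuousSMul G X]

theorem finite_setOf_dist_smul_lt (o : X) (r : ℝ) : {g : G | dist (g • o) o < r}.Finite :=
  (finite_setOf_smul_mem_of_isCompact o (isCompact_closedBall o r)).subset
    fun _ hg => Metric.mem_closedBall.mpr (le_of_lt hg)

/-- Measured by the number of group elements moving `o` strictly closer than `h` does. -/
theorem wellFounded_dist_smul_lt (o : X) :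
    WellFounded (fun g h : G => dist (g • o) o < dist (h • o) o) := by
  let closer (h : G) : Set G := {g | dist (g • o) o < dist (h • o) o}
  refine Subrelation.wf (fun {g h} hgh => ?_)
    (InvImage.wf (fun h => (closer h).ncard) wellFounded_lt)
  have hsub : closer g ⊂ closer h :=
    (Set.ssubset_iff_of_subset fun _ hk => lt_trans hk hgh).mpr
      ⟨g, hgh, fun hg : dist (g • o) o < _ => lt_irrefl _ hg⟩
  exact Set.ncard_lt_ncard hsub (finite_setOf_dist_smul_lt o _)

end OrbitDistance

section Reduction

variable {G X ι : Type*} [Group G] [MulAction G X]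

theorem prod_map_cons_inv_smul (γs : ι → G) (i : ι) (L : List ι) (x : X) :
    (((i :: L).map γs).prod)⁻¹ • x = ((L.map γs).prod)⁻¹ • (γs i)⁻¹ • x := by
  simp [mul_smul]

theorem exists_descending_reduction [PseudoMetricSpace X] [ProperSpace X]
    [ProperlyDiscontinuousSMul G X]
    (o : X) (γs : ι → G) (D : Set X)
    (hred : ∀ x : X, x ∉ D → ∃ i : ι, dist ((γs i)⁻¹ • x) o < dist x o) (g : G) :
    ∃ L : List ι,
      (∀ k : ℕ, k < L.length →
        dist ((((L.take (k + 1)).map γs).prod)⁻¹ • g • o) o <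
          dist ((((L.take k).map γs).prod)⁻¹ • g • o) o) ∧
      ((((L.map γs).prod)⁻¹ • g • o) ∈ D) := by
  induction g using (wellFounded_dist_smul_lt (G := G) o).induction with
  | _ g ih =>
  by_cases hgD : g • o ∈ D
  · exact ⟨[], by simp, by simpa using hgD⟩
  obtain ⟨i, hi⟩ := hred (g • o) hgD
  have hstep : dist (((γs i)⁻¹ * g) • o) o < dist (g • o) o := by rwa [mul_smul]
  obtain ⟨L, hdesc, hend⟩ := ih _ hstep
  rw [mul_smul] at hdesc hend
  refine ⟨i :: L, fun k hk => ?_, ?_⟩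
  · cases k with
    | zero => simpa [mul_smul] using hstep
    | succ k =>
      simp only [List.take_succ_cons, prod_map_cons_inv_smul]
      exact hdesc k (by simpa using hk)
  · rwa [prod_map_cons_inv_smul]

end Reduction

theorem stmt14_general {G X : Type*} [Group G] [MetricSpace X] [ProperSpace X]
    [MulAction G X]
    [ProperlyDiscontinuousSMul G X]
    (hfree : ∀ (g : G) (x : X), g • x = x → g = 1)
    (o : X) (m : ℕ) (γs : Fin m → G)
    (D : Set X)
    (ho : ∀ g : G, g • o ∈ D → g • o = o)
    (hred : ∀ x : X, x ∉ D → ∃ i : Fin m, dist ((γs i)⁻¹ • x) o < dist x o)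
    (γ : G) :
    ∃ L : List (Fin m),
      (L.map γs).prod = γ ∧
      (∀ k : ℕ, k < L.length →
        dist ((((L.take (k + 1)).map γs).prod)⁻¹ • γ • o) o <
          dist ((((L.take k).map γs).prod)⁻¹ • γ • o) o) ∧
      ((((L.map γs).prod)⁻¹ • γ • o) ∈ D) := by
  obtain ⟨L, hdesc, hend⟩ := exists_descending_reduction o γs D hred γ
  have hprod : ((L.map γs).prod)⁻¹ * γ = 1 := hfree _ o (ho _ (by rwa [mul_smul]))
  exact ⟨L, inv_mul_eq_one.mp hprod, hdesc, hend⟩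

/-- Correctness of the Dirichlet domain reduction algorithm: for every `γ ∈ Γ` there
is a finite list of face-pairing elements whose successive inverse applications to
`γ·o` strictly decrease the distance to `o` at each step, end inside `D`, and whose
ordered product equals `γ`. -/
theorem stmt14 {G X : Type*} [Group G] [MetricSpace X] [ProperSpace X]
    [MulAction G X] (hiso : ∀ g : G, Isometry (fun x : X => g • x))
    [ProperlyDiscontinuousSMul G X]
    (hfree : ∀ (g : G) (x : X), g • x = x → g = 1)
    (o : X) (m : ℕ) (γs : Fin m → G)
    (D : Set X) (hD : D = {y : X | ∀ i : Fin m, dist y o ≤ dist y (γs i • o)})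
    (ho : ∀ g : G, g • o ∈ D → g • o = o)
    (hred : ∀ x : X, x ∉ D → ∃ i : Fin m, dist ((γs i)⁻¹ • x) o < dist x o)
    (γ : G) :
    ∃ L : List (Fin m),
      (L.map γs).prod = γ ∧
      (∀ k : ℕ, k < L.length →
        dist ((((L.take (k + 1)).map γs).prod)⁻¹ • γ • o) o <
          dist ((((L.take k).map γs).prod)⁻¹ • γ • o) o) ∧
      ((((L.map γs).prod)⁻¹ • γ • o) ∈ D) :=
  stmt14_general hfree o m γs D ho hred γ
end
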